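/- arXiv:2312.07262 — 2 statements merged into one kernel-verified Lean document; each statement's English description precedes it below -/
import Mathlib

section
/- Let p ≥ 1, n ≥ 1, γ > 0 and y_1,…,y_n ∈ ℝ^p. Suppose the prior density has the product form π(Ω) = (∏_{1≤i<j≤p} π_{ij}(ω_{ij})) · (∏_{i=1}^p π_{ii}(ω_{ii})) · 1_{Ω ∈ M⁺}, where each off-diagonal factor π_{ij} (i < j) is a nonnegative measurable integrable function on ℝ, each diagonal factor π_{ii} is a nonnegative measurable function on (0,∞), and for each i = 1,…,p there exists an integrable function g_i on (0,∞) such that ω^{1/(2(1+γ))} π_{ii}(ω) ≤ g_i(ω) for all ω > 0. Then the normalizing constant of the MAP γ-posterior is finite: ∫ |Ω|^{1/(2(1+γ))} (Σ_{i=1}^n exp(−(γ/2) y_iᵀΩy_i))^{1/γ} π(Ω) dΩ < ∞. -/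
open MeasureTheory Matrix Filter Topology
open scoped ENNReal NNReal


lemma lintegral_pi_prod {ι : Type*} [Fintype ι] [DecidableEq ι] (f : ι → ℝ → ℝ≥0∞)
    (hf : ∀ i, Measurable (f i)) :
    ∫⁻ x : ι → ℝ, (∏ i, f i (x i)) = ∏ i, ∫⁻ t, f i t := by
  have hF : Measurable fun x : ι → ℝ => ∏ i, f i (x i) :=
    Finset.measurable_prod _ fun i _ => (hf i).comp (measurable_pi_apply i)
  have key : ∀ s : Finset ι, ∀ x : ι → ℝ,
      (∫⋯∫⁻_s, (fun x => ∏ i, f i (x i))) x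
        = (∏ i ∈ s, ∫⁻ t, f i t) * ∏ i ∈ sᶜ, f i (x i) := by
    intro s
    induction s using Finset.induction with
    | empty => intro x; simp
    | @insert i s hi ih =>
      intro x
      rw [lmarginal_insert _ hF hi]
      have hmem : i ∈ sᶜ := Finset.mem_compl.2 hi
      have hprod : ∀ xᵢ : ℝ, ∏ j ∈ sᶜ, f j (Function.update x i xᵢ j)
          = f i xᵢ * ∏ j ∈ (insert i s)ᶜ, f j (x j) := by
        intro xᵢ
        rw [← Finset.mul_prod_erase sᶜ _ hmem, Function.update_self,
          Finset.compl_insert]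
        congr 1
        refine Finset.prod_congr rfl fun j hj => ?_
        rw [Function.update_of_ne (Finset.ne_of_mem_erase hj)]
      calc ∫⁻ xᵢ, (∫⋯∫⁻_s, (fun x => ∏ i, f i (x i))) (Function.update x i xᵢ)
          = ∫⁻ xᵢ, (∏ j ∈ s, ∫⁻ t, f j t) *
              (f i xᵢ * ∏ j ∈ (insert i s)ᶜ, f j (x j)) := by
            congr 1; ext xᵢ; rw [ih, hprod]
        _ = (∏ j ∈ insert i s, ∫⁻ t, f j t) * ∏ j ∈ (insert i s)ᶜ, f j (x j) := by
            rw [lintegral_const_mul _ ((hf i).mul_const _),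
              lintegral_mul_const _ (hf i), Finset.prod_insert hi]
            ring
  have h := key Finset.univ (fun _ => 0)
  simp only [Finset.compl_univ, Finset.prod_empty, mul_one] at h
  rw [volume_pi, lintegral_eq_lmarginal_univ (fun _ => (0:ℝ)), h]

lemma trace_eq_sum_eigs {m : Type*} [Fintype m] [DecidableEq m]
    {A : Matrix m m ℝ} (hA : A.IsHermitian) :
    A.trace = ∑ i, hA.eigenvalues i := by
  simpa using hA.trace_eq_sum_eigenvalues

lemma diag_pos_of_posDef {m : Type*} [Fintype m] [DecidableEq m]
    {A : Matrix m m ℝ} (hA : A.PosDef) (i : m) : 0 < A i i := by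
  have := hA.diag_pos (i := i)
  simpa [Matrix.mulVec_single, dotProduct, Pi.single_apply, ite_mul] using this

lemma hadamard_det_le {m : Type*} [Fintype m] [DecidableEq m] [Nonempty m]
    {A : Matrix m m ℝ} (hA : A.PosDef) : A.det ≤ ∏ i, A i i := by
  classical
  set d : m → ℝ := fun i => A i i with hd
  have hdpos : ∀ i, 0 < d i := fun i => diag_pos_of_posDef hA i
  set e : m → ℝ := fun i => (Real.sqrt (d i))⁻¹ with he
  have hsq : ∀ i, e i ^ 2 * d i = 1 := by
    intro i
    have h1 : e i ^ 2 = (d i)⁻¹ := by rw [he, inv_pow, Real.sq_sqrt (hdpos i).le]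
    rw [h1, inv_mul_cancel₀ (hdpos i).ne']
  set C : Matrix m m ℝ := Matrix.diagonal e * A * Matrix.diagonal e with hC
  have hCpsd : C.PosSemidef := by
    have := hA.posSemidef.mul_mul_conjTranspose_same (Matrix.diagonal e)
    simpa [Matrix.diagonal_conjTranspose, hC] using this
  have hCdiag : ∀ i, C i i = 1 := by
    intro i
    have h2 : C i i = e i * A i i * e i := by
      rw [hC, Matrix.mul_diagonal, Matrix.diagonal_mul]
    rw [h2, (by ring : e i * A i i * e i = e i ^ 2 * d i), hsq i]
  have htr : C.trace = (Fintype.card m : ℝ) := by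
    rw [Matrix.trace]
    simp [Matrix.diag, hCdiag]
  set lam := hCpsd.1.eigenvalues with hlam
  have hlam_nonneg : ∀ i, 0 ≤ lam i := fun i => hCpsd.eigenvalues_nonneg i
  have hdet : C.det = ∏ i, lam i := by
    have := hCpsd.1.det_eq_prod_eigenvalues
    simpa using this
  have hsum : ∑ i, lam i = (Fintype.card m : ℝ) := by
    rw [← trace_eq_sum_eigs hCpsd.1, htr]
  have hcard : (0:ℝ) < (Fintype.card m : ℝ) := by exact_mod_cast Fintype.card_pos
  have hgm : ∏ i, (lam i) ^ ((Fintype.card m : ℝ)⁻¹) ≤ 1 := by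
    have h3 := Real.geom_mean_le_arith_mean_weighted Finset.univ
      (fun _ => (Fintype.card m : ℝ)⁻¹) lam (fun i _ => by positivity)
      (by simp [Finset.sum_const, Finset.card_univ]) (fun i _ => hlam_nonneg i)
    calc ∏ i, (lam i) ^ ((Fintype.card m : ℝ)⁻¹)
        ≤ ∑ i, (Fintype.card m : ℝ)⁻¹ * lam i := h3
      _ = (Fintype.card m : ℝ)⁻¹ * ∑ i, lam i := by rw [Finset.mul_sum]
      _ = 1 := by rw [hsum, inv_mul_cancel₀ hcard.ne']
  have hdetC : C.det ≤ 1 := by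
    have hpow : (∏ i, (lam i) ^ ((Fintype.card m : ℝ)⁻¹)) ^ (Fintype.card m) = ∏ i, lam i := by
      rw [← Finset.prod_pow]
      refine Finset.prod_congr rfl fun i _ => ?_
      rw [← Real.rpow_natCast ((lam i) ^ ((Fintype.card m : ℝ)⁻¹)) (Fintype.card m),
        ← Real.rpow_mul (hlam_nonneg i), inv_mul_cancel₀ hcard.ne', Real.rpow_one]
    rw [hdet, ← hpow]
    calc (∏ i, (lam i) ^ ((Fintype.card m : ℝ)⁻¹)) ^ (Fintype.card m)
        ≤ 1 ^ (Fintype.card m) := by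
          refine pow_le_pow_left₀ ?_ hgm _
          exact Finset.prod_nonneg fun i _ => Real.rpow_nonneg (hlam_nonneg i) _
      _ = 1 := one_pow _
  have hdetC_eq : C.det = (∏ i, e i)^2 * A.det := by
    rw [hC, Matrix.det_mul, Matrix.det_mul, Matrix.det_diagonal]
    ring
  have hprod_ed : (∏ i, e i)^2 * ∏ i, d i = 1 := by
    rw [← Finset.prod_pow, ← Finset.prod_mul_distrib]
    exact Finset.prod_eq_one fun i _ => hsq i
  have hdprod_pos : 0 < ∏ i, d i := Finset.prod_pos fun i _ => hdpos i
  have hAeq : C.det * ∏ i, d i = A.det := by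
    rw [hdetC_eq, mul_comm ((∏ i, e i)^2) A.det, mul_assoc, hprod_ed, mul_one]
  calc A.det = C.det * ∏ i, d i := hAeq.symm
    _ ≤ 1 * ∏ i, d i := mul_le_mul_of_nonneg_right hdetC hdprod_pos.le
    _ = ∏ i, d i := one_mul _

/-- Build a symmetric `p × p` matrix from its upper-triangular entries. -/
noncomputable def symOfUpper (p : ℕ) (x : {ij : Fin p × Fin p // ij.1 ≤ ij.2} → ℝ) :
    Matrix (Fin p) (Fin p) ℝ :=
  Matrix.of fun i j => if h : i ≤ j then x ⟨(i, j), h⟩ else x ⟨(j, i), le_of_not_ge h⟩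

/-- Posterior propriety of the MAP γ-posterior under a product-form prior. -/
theorem stmt0 (p n : ℕ) (hp : 1 ≤ p) (hn : 1 ≤ n) (γ : ℝ) (hγ : 0 < γ)
    (y : Fin n → (Fin p → ℝ))
    (πod : Fin p → Fin p → ℝ → ℝ) (πd : Fin p → ℝ → ℝ)
    (hod_meas : ∀ i j : Fin p, i < j → Measurable (πod i j))
    (hod_nonneg : ∀ i j : Fin p, i < j → ∀ t : ℝ, 0 ≤ πod i j t)
    (hod_int : ∀ i j : Fin p, i < j → Integrable (πod i j))
    (hd_meas : ∀ i : Fin p, Measurable (πd i))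
    (hd_nonneg : ∀ i : Fin p, ∀ t : ℝ, 0 < t → 0 ≤ πd i t)
    (g : Fin p → ℝ → ℝ)
    (hg_int : ∀ i : Fin p, IntegrableOn (g i) (Set.Ioi (0 : ℝ)))
    (hbound : ∀ i : Fin p, ∀ ω : ℝ, 0 < ω → ω ^ (1 / (2 * (1 + γ))) * πd i ω ≤ g i ω) :
    ∫⁻ x : {ij : Fin p × Fin p // ij.1 ≤ ij.2} → ℝ,
      ENNReal.ofReal
        ((symOfUpper p x).det ^ (1 / (2 * (1 + γ))) *
          (∑ i : Fin n, Real.exp (-(γ / 2) * (y i ⬝ᵥ (symOfUpper p x *ᵥ y i)))) ^ (1 / γ) *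
          ((∏ ij ∈ Finset.univ.filter (fun ij : Fin p × Fin p => ij.1 < ij.2),
              πod ij.1 ij.2 (symOfUpper p x ij.1 ij.2)) *
            (∏ i : Fin p, πd i (symOfUpper p x i i)) *
            Set.indicator {Ω : Matrix (Fin p) (Fin p) ℝ | Ω.PosDef} (fun _ => (1 : ℝ))
              (symOfUpper p x))) < ⊤ := by
  classical
  haveI : Nonempty (Fin p) := Fin.pos_iff_nonempty.mp hp
  set ι := {ij : Fin p × Fin p // ij.1 ≤ ij.2} with hι
  set a : ℝ := 1 / (2 * (1 + γ)) with ha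
  have ha_pos : 0 < a := by positivity
  -- diagonal index
  set di : Fin p → ι := fun i => ⟨(i, i), le_refl i⟩ with hdi
  -- measurable versions of indicator g
  have hind_int : ∀ i : Fin p, Integrable ((Set.Ioi (0:ℝ)).indicator (g i)) := fun i =>
    (integrable_indicator_iff measurableSet_Ioi).2 (hg_int i)
  have hGex : ∀ i : Fin p, ∃ G : ℝ → ℝ, Measurable G ∧
      (Set.Ioi (0:ℝ)).indicator (g i) =ᵐ[volume] G := by
    intro i
    have h := (hind_int i).aemeasurable
    exact ⟨h.mk _, h.measurable_mk, h.ae_eq_mk⟩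
  choose G hGmeas hGae using hGex
  -- the bounding factor functions
  set f : ι → ℝ → ℝ≥0∞ := fun s t =>
    if s.1.1 < s.1.2 then ENNReal.ofReal (πod s.1.1 s.1.2 t)
    else ENNReal.ofReal (G s.1.1 t) with hf
  have hf_cases : ∀ s : ι, (s.1.1 < s.1.2 ∧ f s = fun t => ENNReal.ofReal (πod s.1.1 s.1.2 t))
      ∨ (¬ s.1.1 < s.1.2 ∧ f s = fun t => ENNReal.ofReal (G s.1.1 t)) := by
    intro s
    by_cases h : s.1.1 < s.1.2
    · exact Or.inl ⟨h, by funext t; rw [hf]; exact if_pos h⟩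
    · exact Or.inr ⟨h, by funext t; rw [hf]; exact if_neg h⟩
  have hf_meas : ∀ s : ι, Measurable (f s) := by
    intro s
    rcases hf_cases s with ⟨h, hfs⟩ | ⟨h, hfs⟩ <;> rw [hfs]
    · exact ENNReal.measurable_ofReal.comp (hod_meas _ _ h)
    · exact ENNReal.measurable_ofReal.comp (hGmeas _)
  have hf_fin : ∀ s : ι, ∫⁻ t, f s t < ⊤ := by
    intro s
    rcases hf_cases s with ⟨h, hfs⟩ | ⟨h, hfs⟩ <;> rw [hfs]
    · calc ∫⁻ t, ENNReal.ofReal (πod s.1.1 s.1.2 t)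
          ≤ ∫⁻ t, (‖πod s.1.1 s.1.2 t‖₊ : ℝ≥0∞) :=
            lintegral_mono fun t => Real.ofReal_le_enorm _
        _ < ⊤ := (hod_int _ _ h).2
    · calc ∫⁻ t, ENNReal.ofReal (G s.1.1 t)
          = ∫⁻ t, ENNReal.ofReal ((Set.Ioi (0:ℝ)).indicator (g s.1.1) t) :=
            lintegral_congr_ae ((hGae s.1.1).mono fun t ht => congrArg ENNReal.ofReal ht.symm)
        _ ≤ ∫⁻ t, (‖(Set.Ioi (0:ℝ)).indicator (g s.1.1) t‖₊ : ℝ≥0∞) :=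
            lintegral_mono fun t => Real.ofReal_le_enorm _
        _ < ⊤ := (hind_int s.1.1).2
  set C : ℝ≥0∞ := ENNReal.ofReal ((n : ℝ) ^ (1 / γ)) with hC
  -- the a.e. coordinate identification
  have hae : ∀ᵐ x : ι → ℝ, ∀ i : Fin p,
      (Set.Ioi (0:ℝ)).indicator (g i) (x (di i)) = G i (x (di i)) := by
    rw [ae_all_iff]
    intro i
    have h0 : volume {t : ℝ | ¬ ((Set.Ioi (0:ℝ)).indicator (g i) t = G i t)} = 0 := by
      have := hGae i
      rwa [Filter.EventuallyEq, ae_iff] at this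
    rw [ae_iff]
    have hset : {x : ι → ℝ | ¬ ((Set.Ioi (0:ℝ)).indicator (g i) (x (di i)) = G i (x (di i)))}
        = Function.eval (di i) ⁻¹' {t : ℝ | ¬ ((Set.Ioi (0:ℝ)).indicator (g i) t = G i t)} := rfl
    rw [hset, volume_pi]
    exact Measure.pi_eval_preimage_null _ h0
  -- pointwise bound
  have hmain : ∀ᵐ x : ι → ℝ,
      ENNReal.ofReal
        ((symOfUpper p x).det ^ a *
          (∑ i : Fin n, Real.exp (-(γ / 2) * (y i ⬝ᵥ (symOfUpper p x *ᵥ y i)))) ^ (1 / γ) *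
          ((∏ ij ∈ Finset.univ.filter (fun ij : Fin p × Fin p => ij.1 < ij.2),
              πod ij.1 ij.2 (symOfUpper p x ij.1 ij.2)) *
            (∏ i : Fin p, πd i (symOfUpper p x i i)) *
            Set.indicator {Ω : Matrix (Fin p) (Fin p) ℝ | Ω.PosDef} (fun _ => (1 : ℝ))
              (symOfUpper p x)))
        ≤ C * ∏ s : ι, f s (x s) := by
    filter_upwards [hae] with x hx
    set Ω := symOfUpper p x with hΩdef
    by_cases hΩ : Ω.PosDef
    swap
    · have hind : Set.indicator {Ω : Matrix (Fin p) (Fin p) ℝ | Ω.PosDef}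
          (fun _ => (1:ℝ)) Ω = 0 := Set.indicator_of_notMem (s := {Ω : Matrix (Fin p) (Fin p) ℝ | Ω.PosDef}) hΩ _
      rw [hind, mul_zero, mul_zero, ENNReal.ofReal_zero]
      exact zero_le
    -- PosDef case
    have hdiag_eq : ∀ i : Fin p, Ω i i = x (di i) := by
      intro i
      simp [hΩdef, symOfUpper, hdi]
    have hdiag_pos : ∀ i : Fin p, 0 < x (di i) := fun i =>
      (hdiag_eq i) ▸ diag_pos_of_posDef hΩ i
    -- real-side quantities
    set S : ℝ := ∑ i : Fin n, Real.exp (-(γ / 2) * (y i ⬝ᵥ (Ω *ᵥ y i))) with hS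
    set P1 : ℝ := ∏ ij ∈ Finset.univ.filter (fun ij : Fin p × Fin p => ij.1 < ij.2),
        πod ij.1 ij.2 (Ω ij.1 ij.2) with hP1
    set P2 : ℝ := ∏ i : Fin p, πd i (Ω i i) with hP2
    set Q : ℝ := ∏ i : Fin p, G i (x (di i)) with hQ
    have hGval : ∀ i : Fin p, G i (x (di i)) = g i (x (di i)) := by
      intro i
      rw [← hx i, Set.indicator_of_mem (Set.mem_Ioi.2 (hdiag_pos i))]
    have hg_nonneg : ∀ i : Fin p, 0 ≤ g i (x (di i)) := fun i =>
      le_trans (mul_nonneg (Real.rpow_nonneg (hdiag_pos i).le _)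
        (hd_nonneg i _ (hdiag_pos i))) (hbound i _ (hdiag_pos i))
    have hQ_nonneg : 0 ≤ Q :=
      Finset.prod_nonneg fun i _ => (hGval i).symm ▸ hg_nonneg i
    have hS_nonneg : 0 ≤ S :=
      Finset.sum_nonneg fun i _ => (Real.exp_pos _).le
    have hP1_nonneg : 0 ≤ P1 :=
      Finset.prod_nonneg fun ij hij =>
        hod_nonneg _ _ (Finset.mem_filter.1 hij).2 _
    have hP2_nonneg : 0 ≤ P2 :=
      Finset.prod_nonneg fun i _ => hd_nonneg i _ (diag_pos_of_posDef hΩ i)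
    -- bound 1 : det^a * P2 ≤ Q
    have hbd1 : Ω.det ^ a * P2 ≤ Q := by
      have hHad : Ω.det ≤ ∏ i, Ω i i := hadamard_det_le hΩ
      have h1 : Ω.det ^ a ≤ (∏ i, Ω i i) ^ a :=
        Real.rpow_le_rpow hΩ.det_pos.le hHad ha_pos.le
      have h2 : (∏ i, Ω i i) ^ a = ∏ i, (Ω i i) ^ a :=
        (Real.finset_prod_rpow _ _ (fun i _ => (diag_pos_of_posDef hΩ i).le) a).symm
      calc Ω.det ^ a * P2 ≤ (∏ i, (Ω i i) ^ a) * P2 := by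
            refine mul_le_mul_of_nonneg_right ?_ hP2_nonneg
            rw [← h2]; exact h1
        _ = ∏ i, ((Ω i i) ^ a * πd i (Ω i i)) := by
            rw [hP2, ← Finset.prod_mul_distrib]
        _ ≤ ∏ i, g i (x (di i)) := by
            refine Finset.prod_le_prod (fun i _ => mul_nonneg
              (Real.rpow_nonneg (diag_pos_of_posDef hΩ i).le _)
              (hd_nonneg i _ (diag_pos_of_posDef hΩ i))) (fun i _ => ?_)
            rw [hdiag_eq i]
            exact hbound i _ (hdiag_pos i)
        _ = Q := by
            rw [hQ]
            exact Finset.prod_congr rfl fun i _ => (hGval i).symm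
    -- bound 2 : S^{1/γ} ≤ n^{1/γ}
    have hbd2 : S ^ (1/γ) ≤ (n : ℝ) ^ (1/γ) := by
      refine Real.rpow_le_rpow hS_nonneg ?_ (by positivity)
      calc S ≤ ∑ _i : Fin n, (1:ℝ) := by
            refine Finset.sum_le_sum fun i _ => ?_
            rw [Real.exp_le_one_iff]
            have hq : 0 ≤ y i ⬝ᵥ (Ω *ᵥ y i) := by
              have := hΩ.posSemidef.dotProduct_mulVec_nonneg (y i)
              simpa using this
            nlinarith
        _ = (n : ℝ) := by simp
    -- combine on the real side
    have hreal : Ω.det ^ a * S ^ (1/γ) * (P1 * P2 * 1)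
        ≤ Q * (n:ℝ) ^ (1/γ) * P1 := by
      have h3 : Ω.det ^ a * S ^ (1/γ) * (P1 * P2 * 1)
          = (Ω.det ^ a * P2) * S ^ (1/γ) * P1 := by ring
      rw [h3]
      refine mul_le_mul_of_nonneg_right ?_ hP1_nonneg
      exact mul_le_mul hbd1 hbd2 (Real.rpow_nonneg hS_nonneg _) hQ_nonneg
    -- pass to ENNReal
    have hle1 : ENNReal.ofReal (Ω.det ^ a * S ^ (1/γ) * (P1 * P2 * 1))
        ≤ ENNReal.ofReal (Q * (n:ℝ) ^ (1/γ) * P1) := ENNReal.ofReal_le_ofReal hreal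
    rw [Set.indicator_of_mem (s := {Ω : Matrix (Fin p) (Fin p) ℝ | Ω.PosDef}) hΩ]
    refine le_trans hle1 (le_of_eq ?_)
    -- rewrite RHS as C * ∏ f
    have hP1ι : P1 = ∏ s ∈ Finset.univ.filter (fun s : ι => s.1.1 < s.1.2),
        πod s.1.1 s.1.2 (x s) := by
      rw [hP1]
      refine Finset.prod_bij' (fun ij hij => (⟨ij, (Finset.mem_filter.1 hij).2.le⟩ : ι))
        (fun s _ => s.1) ?_ ?_ ?_ ?_ ?_
      · intro ij hij
        simp only [Finset.mem_filter, Finset.mem_univ, true_and]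
        exact (Finset.mem_filter.1 hij).2
      · intro s hs
        simp only [Finset.mem_filter, Finset.mem_univ, true_and]
        exact (Finset.mem_filter.1 hs).2
      · intro ij hij; rfl
      · intro s hs; rfl
      · intro ij hij
        have hlt := (Finset.mem_filter.1 hij).2
        have : Ω ij.1 ij.2 = x ⟨ij, hlt.le⟩ := by
          rw [hΩdef]
          show (if h : ij.1 ≤ ij.2 then x ⟨(ij.1, ij.2), h⟩ else x ⟨(ij.2, ij.1), _⟩) = _
          rw [dif_pos hlt.le]
        rw [this]
    have hsplit : (∏ s : ι, f s (x s))
        = (∏ s ∈ Finset.univ.filter (fun s : ι => s.1.1 < s.1.2),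
            ENNReal.ofReal (πod s.1.1 s.1.2 (x s))) *
          ∏ i : Fin p, ENNReal.ofReal (G i (x (di i))) := by
      rw [← Finset.prod_filter_mul_prod_filter_not Finset.univ (fun s : ι => s.1.1 < s.1.2)]
      congr 1
      · refine Finset.prod_congr rfl fun s hs => ?_
        rw [hf]
        exact if_pos (Finset.mem_filter.1 hs).2
      · refine Finset.prod_bij' (fun s _ => s.1.1) (fun i _ => di i) ?_ ?_ ?_ ?_ ?_
        · intro s hs; exact Finset.mem_univ _
        · intro i _
          simp only [Finset.mem_filter, Finset.mem_univ, true_and, hdi]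
          exact lt_irrefl i
        · intro s hs
          have hnlt := (Finset.mem_filter.1 hs).2
          have heq : s.1.1 = s.1.2 := le_antisymm s.2 (not_lt.1 hnlt)
          exact Subtype.ext (Prod.ext rfl heq)
        · intro i _; rfl
        · intro s hs
          have hnlt := (Finset.mem_filter.1 hs).2
          have heq : s.1.1 = s.1.2 := le_antisymm s.2 (not_lt.1 hnlt)
          have hs_eq : di s.1.1 = s := Subtype.ext (Prod.ext rfl heq)
          rw [hs_eq, hf]
          exact if_neg hnlt
    calc ENNReal.ofReal (Q * (n:ℝ)^(1/γ) * P1)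
        = ENNReal.ofReal (Q * (n:ℝ)^(1/γ)) * ENNReal.ofReal P1 :=
          ENNReal.ofReal_mul (mul_nonneg hQ_nonneg (by positivity))
      _ = ENNReal.ofReal Q * ENNReal.ofReal ((n:ℝ)^(1/γ)) * ENNReal.ofReal P1 := by
          rw [ENNReal.ofReal_mul hQ_nonneg]
      _ = C * (ENNReal.ofReal P1 * ENNReal.ofReal Q) := by rw [hC]; ring
      _ = C * ∏ s : ι, f s (x s) := by
          rw [hsplit, hP1ι, hQ,
            ENNReal.ofReal_prod_of_nonneg
              (fun s hs => hod_nonneg _ _ (Finset.mem_filter.1 hs).2 _),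
            ENNReal.ofReal_prod_of_nonneg
              (fun i _ => by rw [hGval i]; exact hg_nonneg i)]
  calc ∫⁻ x : ι → ℝ,
      ENNReal.ofReal
        ((symOfUpper p x).det ^ a *
          (∑ i : Fin n, Real.exp (-(γ / 2) * (y i ⬝ᵥ (symOfUpper p x *ᵥ y i)))) ^ (1 / γ) *
          ((∏ ij ∈ Finset.univ.filter (fun ij : Fin p × Fin p => ij.1 < ij.2),
              πod ij.1 ij.2 (symOfUpper p x ij.1 ij.2)) *
            (∏ i : Fin p, πd i (symOfUpper p x i i)) *
            Set.indicator {Ω : Matrix (Fin p) (Fin p) ℝ | Ω.PosDef} (fun _ => (1 : ℝ))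
              (symOfUpper p x)))
      ≤ ∫⁻ x : ι → ℝ, C * ∏ s : ι, f s (x s) := lintegral_mono_ae hmain
    _ = C * ∫⁻ x : ι → ℝ, ∏ s : ι, f s (x s) :=
        lintegral_const_mul' C _ ENNReal.ofReal_ne_top
    _ = C * ∏ s : ι, ∫⁻ t, f s t := by rw [lintegral_pi_prod f hf_meas]
    _ < ⊤ := ENNReal.mul_lt_top ENNReal.ofReal_lt_top
        (ENNReal.prod_lt_top fun s _ => hf_fin s)
end

section
/- Assume the outlier model, and assume that for every observation matrix Y = (y_1,…,y_n) with y_i ∈ ℝ^p the normalizing constant ∫ q_γ(Ω; y_1,…,y_n) dΩ is finite, and that it is strictly positive for the data D(z) (for every z > 0) and for D*. Then the MAP γ-posterior satisfies posterior robustness: ∫ |π_γ(Ω | D(z)) − π_γ(Ω | D*)| dΩ → 0 as z → ∞. -/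
open MeasureTheory Matrix Filter Topology

instance matrixMeasurableSpace {m n α : Type*} [MeasurableSpace α] :
    MeasurableSpace (Matrix m n α) :=
  inferInstanceAs (MeasurableSpace (m → n → α))

/-- The unnormalized MAP γ-posterior
`q_γ(Ω; (y_i)_{i ∈ S}) = |Ω|^{1/(2(1+γ))} (∑_{i∈S} exp(−(γ/2) y_iᵀΩy_i))^{1/γ} π(Ω)`. -/
noncomputable def qGamma {p n : ℕ} (γ : ℝ) (pr : Matrix (Fin p) (Fin p) ℝ → ℝ)
    (S : Finset (Fin n)) (Y : Fin n → (Fin p → ℝ)) (Ω : Matrix (Fin p) (Fin p) ℝ) : ℝ :=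
  Ω.det ^ (1 / (2 * (1 + γ))) *
    (∑ i ∈ S, Real.exp (-(γ / 2) * (Y i ⬝ᵥ (Ω *ᵥ Y i)))) ^ (1 / γ) * pr Ω

/-- Observations in the outlier model: `y_i(z) = a_i` for `i ∈ K`, and `a_i + z • b_i` else. -/
noncomputable def yData {p n : ℕ} (z : ℝ) (K : Finset (Fin n)) (a b : Fin n → (Fin p → ℝ)) :
    Fin n → (Fin p → ℝ) :=
  fun i => if i ∈ K then a i else a i + z • b i

section Aux

private lemma symOfUpper_continuous (p : ℕ) : Continuous (symOfUpper p) := by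
  refine continuous_pi fun i => continuous_pi fun j => ?_
  simp only [symOfUpper, Matrix.of_apply]
  split
  · exact continuous_apply _
  · exact continuous_apply _

private lemma measurable_symOfUpper (p : ℕ) : Measurable (symOfUpper p) := by
  refine measurable_pi_lambda _ fun i => measurable_pi_lambda _ fun j => ?_
  simp only [symOfUpper, Matrix.of_apply]
  split
  · exact measurable_pi_apply _
  · exact measurable_pi_apply _

private lemma measurable_qsym {p n : ℕ} {γ : ℝ} (hγ : 0 < γ)
    {pr : Matrix (Fin p) (Fin p) ℝ → ℝ} (hpr : Measurable pr)
    (S : Finset (Fin n)) (Y : Fin n → Fin p → ℝ) :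
    Measurable fun x : {ij : Fin p × Fin p // ij.1 ≤ ij.2} → ℝ =>
      qGamma γ pr S Y (symOfUpper p x) := by
  have hsymc : Continuous (symOfUpper p) := symOfUpper_continuous p
  have h1 : Continuous fun x : {ij : Fin p × Fin p // ij.1 ≤ ij.2} → ℝ =>
      ((symOfUpper p x).det ^ (1 / (2 * (1 + γ)))) :=
    (Real.continuous_rpow_const (one_div_nonneg.mpr (by linarith))).comp hsymc.matrix_det
  have h2 : Continuous fun x : {ij : Fin p × Fin p // ij.1 ≤ ij.2} → ℝ =>
      (∑ i ∈ S, Real.exp (-(γ / 2) * (Y i ⬝ᵥ (symOfUpper p x *ᵥ Y i)))) ^ (1 / γ) := by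
    refine (Real.continuous_rpow_const (one_div_nonneg.mpr hγ.le)).comp ?_
    refine continuous_finset_sum _ fun i _ => Real.continuous_exp.comp ?_
    exact continuous_const.mul (Continuous.dotProduct continuous_const
      (hsymc.matrix_mulVec continuous_const))
  simp only [qGamma]
  exact ((h1.mul h2).measurable).mul (hpr.comp (measurable_symOfUpper p))

private lemma qGamma_nonneg {p n : ℕ} (γ : ℝ)
    {pr : Matrix (Fin p) (Fin p) ℝ → ℝ} (hpr_nonneg : ∀ Ω, 0 ≤ pr Ω)
    (hpr_supp : ∀ Ω : Matrix (Fin p) (Fin p) ℝ, ¬ Ω.PosDef → pr Ω = 0)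
    (S : Finset (Fin n)) (Y : Fin n → Fin p → ℝ) (Ω : Matrix (Fin p) (Fin p) ℝ) :
    0 ≤ qGamma γ pr S Y Ω := by
  by_cases h : Ω.PosDef
  · exact mul_nonneg (mul_nonneg (Real.rpow_nonneg h.det_pos.le _)
      (Real.rpow_nonneg (Finset.sum_nonneg fun i _ => (Real.exp_pos _).le) _)) (hpr_nonneg Ω)
  · simp [qGamma, hpr_supp Ω h]

private lemma qGamma_le {p n : ℕ} {γ : ℝ} (hγ : 0 < γ)
    {pr : Matrix (Fin p) (Fin p) ℝ → ℝ} (hpr_nonneg : ∀ Ω, 0 ≤ pr Ω)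
    (hpr_supp : ∀ Ω : Matrix (Fin p) (Fin p) ℝ, ¬ Ω.PosDef → pr Ω = 0)
    {S S' : Finset (Fin n)} {Y Y' : Fin n → Fin p → ℝ}
    (h : ∀ Ω : Matrix (Fin p) (Fin p) ℝ, Ω.PosDef →
      (∑ i ∈ S, Real.exp (-(γ / 2) * (Y i ⬝ᵥ (Ω *ᵥ Y i)))) ≤
      (∑ i ∈ S', Real.exp (-(γ / 2) * (Y' i ⬝ᵥ (Ω *ᵥ Y' i)))))
    (Ω : Matrix (Fin p) (Fin p) ℝ) : qGamma γ pr S Y Ω ≤ qGamma γ pr S' Y' Ω := by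
  by_cases hP : Ω.PosDef
  · unfold qGamma
    refine mul_le_mul_of_nonneg_right (mul_le_mul_of_nonneg_left ?_
      (Real.rpow_nonneg hP.det_pos.le _)) (hpr_nonneg Ω)
    exact Real.rpow_le_rpow (Finset.sum_nonneg fun i _ => (Real.exp_pos _).le) (h Ω hP)
      (one_div_nonneg.mpr hγ.le)
  · simp [qGamma, hpr_supp Ω hP]

private lemma quad_expand {p : ℕ} (Ω : Matrix (Fin p) (Fin p) ℝ) (a b : Fin p → ℝ) (z : ℝ) :
    ((a + z • b) ⬝ᵥ (Ω *ᵥ (a + z • b))) =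
      (b ⬝ᵥ (Ω *ᵥ b)) * z ^ 2 + ((a ⬝ᵥ (Ω *ᵥ b)) + (b ⬝ᵥ (Ω *ᵥ a))) * z + (a ⬝ᵥ (Ω *ᵥ a)) := by
  simp only [mulVec_add, mulVec_smul, dotProduct_add, add_dotProduct, smul_dotProduct,
    dotProduct_smul, smul_eq_mul]
  ring

private lemma tendsto_quad {B C A : ℝ} (hB : 0 < B) :
    Tendsto (fun z : ℝ => B * z ^ 2 + C * z + A) atTop atTop := by
  have h1 : Tendsto (fun z : ℝ => B * z + C) atTop atTop :=
    tendsto_atTop_add_const_right _ C (tendsto_id.const_mul_atTop hB)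
  have h2 : Tendsto (fun z : ℝ => z * (B * z + C)) atTop atTop :=
    tendsto_id.atTop_mul_atTop₀ h1
  have : (fun z : ℝ => B * z ^ 2 + C * z + A) = fun z => z * (B * z + C) + A := by
    funext z; ring
  rw [this]
  exact tendsto_atTop_add_const_right _ A h2

end Aux
private lemma l1_normalized {α : Type*} [MeasurableSpace α] {μ : Measure α}
    {F : ℝ → α → ℝ} {G : α → ℝ}
    (hFint : ∀ z, Integrable (F z) μ) (hGint : Integrable G μ)
    (hG0 : ∀ x, 0 ≤ G x)
    (hd : Tendsto (fun z => ∫ x, |F z x - G x| ∂μ) atTop (𝓝 0))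
    (hc : Tendsto (fun z => ∫ x, F z x ∂μ) atTop (𝓝 (∫ x, G x ∂μ)))
    (hcz : ∀ z : ℝ, 0 < z → 0 < ∫ x, F z x ∂μ)
    (hcpos : 0 < ∫ x, G x ∂μ) :
    Tendsto (fun z => ∫ x, |F z x / (∫ x', F z x' ∂μ) - G x / (∫ x', G x' ∂μ)| ∂μ)
      atTop (𝓝 0) := by
  set c := ∫ x, G x ∂μ with hcdef
  have hcne : c ≠ 0 := ne_of_gt hcpos
  have hinv : Tendsto (fun z => (∫ x, F z x ∂μ)⁻¹) atTop (𝓝 c⁻¹) := hc.inv₀ hcne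
  have habs : Tendsto (fun z => |(∫ x, F z x ∂μ)⁻¹ - c⁻¹|) atTop (𝓝 0) := by
    have := (hinv.sub (tendsto_const_nhds (x := c⁻¹))).abs
    simpa using this
  have hU : Tendsto (fun z => (∫ x, |F z x - G x| ∂μ) * (∫ x, F z x ∂μ)⁻¹
      + c * |(∫ x, F z x ∂μ)⁻¹ - c⁻¹|) atTop (𝓝 0) := by
    have := (hd.mul hinv).add (habs.const_mul c)
    simpa using this
  refine squeeze_zero' ?_ ?_ hU
  · exact Eventually.of_forall fun z => integral_nonneg fun x => abs_nonneg _
  · filter_upwards [eventually_gt_atTop (0 : ℝ)] with z hz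
    have hczpos : 0 < ∫ x, F z x ∂μ := hcz z hz
    have hczne : (∫ x, F z x ∂μ) ≠ 0 := ne_of_gt hczpos
    have hpt : ∀ x, |F z x / (∫ x', F z x' ∂μ) - G x / c| ≤
        |F z x - G x| * (∫ x', F z x' ∂μ)⁻¹ + G x * |(∫ x', F z x' ∂μ)⁻¹ - c⁻¹| := by
      intro x
      have hrw : F z x / (∫ x', F z x' ∂μ) - G x / c
          = (F z x - G x) * (∫ x', F z x' ∂μ)⁻¹ + G x * ((∫ x', F z x' ∂μ)⁻¹ - c⁻¹) := by
        field_simp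
        ring
      rw [hrw]
      refine (abs_add_le _ _).trans ?_
      rw [abs_mul, abs_mul, abs_of_nonneg (inv_nonneg.mpr hczpos.le), abs_of_nonneg (hG0 x)]
    have hint1 : Integrable (fun x => |F z x - G x| * (∫ x', F z x' ∂μ)⁻¹) μ :=
      (((hFint z).sub hGint).abs).mul_const _
    have hint2 : Integrable (fun x => G x * |(∫ x', F z x' ∂μ)⁻¹ - c⁻¹|) μ :=
      hGint.mul_const _
    calc ∫ x, |F z x / (∫ x', F z x' ∂μ) - G x / c| ∂μ
        ≤ ∫ x, (|F z x - G x| * (∫ x', F z x' ∂μ)⁻¹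
            + G x * |(∫ x', F z x' ∂μ)⁻¹ - c⁻¹|) ∂μ := by
          refine integral_mono ?_ (hint1.add hint2) hpt
          exact (((hFint z).div_const _).sub (hGint.div_const _)).abs
      _ = (∫ x, |F z x - G x| ∂μ) * (∫ x, F z x ∂μ)⁻¹
            + c * |(∫ x, F z x ∂μ)⁻¹ - c⁻¹| := by
          rw [integral_add hint1 hint2, integral_mul_const, integral_mul_const]

/-- Posterior robustness of the MAP γ-posterior. -/
theorem stmt1 (p n : ℕ) (γ : ℝ) (hγ : 0 < γ)
    (K L : Finset (Fin n)) (hdisj : Disjoint K L) (hcover : K ∪ L = Finset.univ)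
    (a b : Fin n → (Fin p → ℝ)) (hb : ∀ i ∈ L, b i ≠ 0)
    (pr : Matrix (Fin p) (Fin p) ℝ → ℝ) (hpr_meas : Measurable pr)
    (hpr_nonneg : ∀ Ω, 0 ≤ pr Ω)
    (hpr_supp : ∀ Ω : Matrix (Fin p) (Fin p) ℝ, ¬ Ω.PosDef → pr Ω = 0)
    (hint : ∀ Y : Fin n → (Fin p → ℝ),
      Integrable (fun x : {ij : Fin p × Fin p // ij.1 ≤ ij.2} → ℝ =>
        qGamma γ pr Finset.univ Y (symOfUpper p x)))
    (hpos : ∀ z : ℝ, 0 < z →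
      0 < ∫ x, qGamma γ pr Finset.univ (yData z K a b) (symOfUpper p x))
    (hpos_star : 0 < ∫ x, qGamma γ pr K a (symOfUpper p x)) :
    Tendsto (fun z : ℝ =>
        ∫ x, |qGamma γ pr Finset.univ (yData z K a b) (symOfUpper p x) /
                (∫ x', qGamma γ pr Finset.univ (yData z K a b) (symOfUpper p x')) -
              qGamma γ pr K a (symOfUpper p x) /
                (∫ x', qGamma γ pr K a (symOfUpper p x'))|)
      atTop (𝓝 0) := by
  classical
  set Y0 : Fin n → Fin p → ℝ := fun i => if i ∈ K then a i else 0 with hY0def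
  -- pointwise bounds by the dominating function
  have hFle : ∀ (z : ℝ) (x : {ij : Fin p × Fin p // ij.1 ≤ ij.2} → ℝ),
      qGamma γ pr Finset.univ (yData z K a b) (symOfUpper p x)
        ≤ qGamma γ pr Finset.univ Y0 (symOfUpper p x) := by
    intro z x
    refine qGamma_le hγ hpr_nonneg hpr_supp (fun Ω hP => ?_) _
    refine Finset.sum_le_sum fun i _ => ?_
    by_cases hi : i ∈ K
    · simp [yData, hY0def, hi]
    · have h0 : 0 ≤ (a i + z • b i) ⬝ᵥ (Ω *ᵥ (a i + z • b i)) := by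
        have := hP.posSemidef.dotProduct_mulVec_nonneg (a i + z • b i)
        rwa [star_trivial] at this
      simp only [yData, hY0def, if_neg hi, zero_dotProduct, mul_zero, Real.exp_zero]
      exact Real.exp_le_one_iff.mpr (by nlinarith)
  have hGle : ∀ x : {ij : Fin p × Fin p // ij.1 ≤ ij.2} → ℝ,
      qGamma γ pr K a (symOfUpper p x) ≤ qGamma γ pr Finset.univ Y0 (symOfUpper p x) := by
    intro x
    refine qGamma_le hγ hpr_nonneg hpr_supp (fun Ω hP => ?_) _
    calc (∑ i ∈ K, Real.exp (-(γ / 2) * (a i ⬝ᵥ (Ω *ᵥ a i))))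
        = ∑ i ∈ K, Real.exp (-(γ / 2) * (Y0 i ⬝ᵥ (Ω *ᵥ Y0 i))) :=
          Finset.sum_congr rfl fun i hi => by simp [hY0def, hi]
      _ ≤ _ := Finset.sum_le_sum_of_subset_of_nonneg (Finset.subset_univ K)
          (fun i _ _ => (Real.exp_pos _).le)
  -- pointwise limit
  have hlim : ∀ x : {ij : Fin p × Fin p // ij.1 ≤ ij.2} → ℝ,
      Tendsto (fun z => qGamma γ pr Finset.univ (yData z K a b) (symOfUpper p x))
        atTop (𝓝 (qGamma γ pr K a (symOfUpper p x))) := by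
    intro x
    set Ω := symOfUpper p x with hΩ
    by_cases hP : Ω.PosDef
    · have hsum : Tendsto (fun z => ∑ i ∈ Finset.univ,
          Real.exp (-(γ / 2) * (yData z K a b i ⬝ᵥ (Ω *ᵥ yData z K a b i)))) atTop
          (𝓝 (∑ i ∈ K, Real.exp (-(γ / 2) * (a i ⬝ᵥ (Ω *ᵥ a i))))) := by
        have hsplit : ∀ z : ℝ, (∑ i ∈ Finset.univ,
            Real.exp (-(γ / 2) * (yData z K a b i ⬝ᵥ (Ω *ᵥ yData z K a b i))))
            = (∑ i ∈ K, Real.exp (-(γ / 2) * (a i ⬝ᵥ (Ω *ᵥ a i))))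
              + ∑ i ∈ L, Real.exp (-(γ / 2) *
                  ((a i + z • b i) ⬝ᵥ (Ω *ᵥ (a i + z • b i)))) := by
          intro z
          rw [← hcover, Finset.sum_union hdisj]
          congr 1
          · exact Finset.sum_congr rfl fun i hi => by simp [yData, hi]
          · refine Finset.sum_congr rfl fun i hi => ?_
            have hiK : i ∉ K := Finset.disjoint_right.mp hdisj hi
            simp [yData, hiK]
        simp only [hsplit]
        have hL0 : Tendsto (fun z : ℝ => ∑ i ∈ L, Real.exp (-(γ / 2) *
            ((a i + z • b i) ⬝ᵥ (Ω *ᵥ (a i + z • b i))))) atTop (𝓝 0) := by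
          have hterm : ∀ i ∈ L, Tendsto (fun z : ℝ => Real.exp (-(γ / 2) *
              ((a i + z • b i) ⬝ᵥ (Ω *ᵥ (a i + z • b i))))) atTop (𝓝 0) := by
            intro i hi
            have hB : 0 < b i ⬝ᵥ (Ω *ᵥ b i) := by
              have := hP.dotProduct_mulVec_pos (hb i hi)
              rwa [star_trivial] at this
            have hq : Tendsto (fun z : ℝ =>
                (a i + z • b i) ⬝ᵥ (Ω *ᵥ (a i + z • b i))) atTop atTop := by
              simp only [quad_expand]
              exact tendsto_quad hB
            have hlin : Tendsto (fun z : ℝ => -(γ / 2) *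
                ((a i + z • b i) ⬝ᵥ (Ω *ᵥ (a i + z • b i)))) atTop atBot :=
              hq.const_mul_atTop_of_neg (by linarith)
            exact Real.tendsto_exp_atBot.comp hlin
          have := tendsto_finset_sum L hterm
          simpa using this
        simpa using (tendsto_const_nhds.add hL0)
      simp only [qGamma]
      exact ((((Real.continuousAt_rpow_const _ _
        (Or.inr (one_div_nonneg.mpr hγ.le))).tendsto).comp hsum).const_mul _).mul_const _
    · simp [qGamma, hpr_supp Ω hP]
  -- integrability
  have hHint : Integrable (fun x : {ij : Fin p × Fin p // ij.1 ≤ ij.2} → ℝ =>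
      qGamma γ pr Finset.univ Y0 (symOfUpper p x)) := hint Y0
  have hGnn : ∀ x, 0 ≤ qGamma γ pr K a (symOfUpper p x) :=
    fun x => qGamma_nonneg γ hpr_nonneg hpr_supp K a _
  have hFnn : ∀ (z : ℝ) x, 0 ≤ qGamma γ pr Finset.univ (yData z K a b) (symOfUpper p x) :=
    fun z x => qGamma_nonneg γ hpr_nonneg hpr_supp _ _ _
  have hGint : Integrable (fun x : {ij : Fin p × Fin p // ij.1 ≤ ij.2} → ℝ =>
      qGamma γ pr K a (symOfUpper p x)) := by
    refine hHint.mono' (measurable_qsym hγ hpr_meas K a).aestronglyMeasurable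
      (Eventually.of_forall fun x => ?_)
    rw [Real.norm_eq_abs, abs_of_nonneg (hGnn x)]
    exact hGle x
  -- L¹ convergence of the unnormalized posteriors
  have hd : Tendsto (fun z : ℝ => ∫ x,
      |qGamma γ pr Finset.univ (yData z K a b) (symOfUpper p x) -
        qGamma γ pr K a (symOfUpper p x)|) atTop (𝓝 0) := by
    have h0 : Tendsto (fun z : ℝ => ∫ x,
        |qGamma γ pr Finset.univ (yData z K a b) (symOfUpper p x) -
          qGamma γ pr K a (symOfUpper p x)|) atTop
        (𝓝 (∫ _x : {ij : Fin p × Fin p // ij.1 ≤ ij.2} → ℝ, (0 : ℝ))) := by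
      refine tendsto_integral_filter_of_dominated_convergence _ ?_ ?_ hHint ?_
      · exact Eventually.of_forall fun z =>
          (((measurable_qsym hγ hpr_meas _ _).sub
            (measurable_qsym hγ hpr_meas K a)).abs).aestronglyMeasurable
      · refine Eventually.of_forall fun z => Eventually.of_forall fun x => ?_
        rw [Real.norm_eq_abs, abs_abs, abs_sub_le_iff]
        have h1 := hFle z x
        have h2 := hGle x
        have h3 := hFnn z x
        have h4 := hGnn x
        exact ⟨by linarith, by linarith⟩
      · refine Eventually.of_forall fun x => ?_
        have := ((hlim x).sub (tendsto_const_nhds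
          (x := qGamma γ pr K a (symOfUpper p x)))).abs
        simpa using this
    simpa using h0
  -- convergence of normalizing constants
  have hc : Tendsto (fun z : ℝ => ∫ x,
      qGamma γ pr Finset.univ (yData z K a b) (symOfUpper p x)) atTop
      (𝓝 (∫ x, qGamma γ pr K a (symOfUpper p x))) := by
    refine tendsto_integral_filter_of_dominated_convergence _ ?_ ?_ hHint ?_
    · exact Eventually.of_forall fun z =>
        (measurable_qsym hγ hpr_meas _ _).aestronglyMeasurable
    · refine Eventually.of_forall fun z => Eventually.of_forall fun x => ?_
      rw [Real.norm_eq_abs, abs_of_nonneg (hFnn z x)]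
      exact hFle z x
    · exact Eventually.of_forall hlim
  exact l1_normalized (fun z => hint (yData z K a b)) hGint hGnn hd hc hpos hpos_star
end
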